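/- There are exactly 24 five-element vertex sets of Δ^1 × Δ^1 × Δ^2 spanning a simplex of class 2, and the group of symmetries of the simplotope generated by permuting coordinates within each factor (of order 2!·2!·3! = 24) acts simply transitively on them. -/

import Mathlib

/-- A vertex of `Π*_{2,1} = Δ¹ × Δ¹ × Δ²` in standard coordinates. -/
def IsVertex21 (x : Fin 2 ⊕ (Fin 2 ⊕ Fin 3) → ℝ) : Prop :=
  (∀ z, x z = 0 ∨ x z = 1) ∧
    x (Sum.inl 0) + x (Sum.inl 1) = 1 ∧
    x (Sum.inr (Sum.inl 0)) + x (Sum.inr (Sum.inl 1)) = 1 ∧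
    x (Sum.inr (Sum.inr 0)) + x (Sum.inr (Sum.inr 1)) + x (Sum.inr (Sum.inr 2)) = 1

/-- The matrix `[1|M_v]` of a 5-vertex simplex in reduced coordinates; the class of the
simplex is `|det|`. -/
def classMat21 (w : Fin 5 → (Fin 2 ⊕ (Fin 2 ⊕ Fin 3) → ℝ)) : Matrix (Fin 5) (Fin 5) ℝ :=
  Matrix.of fun r => ![1, w r (Sum.inl 0), w r (Sum.inr (Sum.inl 0)),
    w r (Sum.inr (Sum.inr 0)), w r (Sum.inr (Sum.inr 1))]

/-- A five-element vertex set of `Δ¹ × Δ¹ × Δ²` spanning a simplex of class 2. -/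
def IsClass2Set (s : Set (Fin 2 ⊕ (Fin 2 ⊕ Fin 3) → ℝ)) : Prop :=
  ∃ w : Fin 5 → (Fin 2 ⊕ (Fin 2 ⊕ Fin 3) → ℝ),
    s = Set.range w ∧ (∀ r, IsVertex21 (w r)) ∧ |(classMat21 w).det| = 2

/-- The group of symmetries of the simplotope generated by permuting coordinates within
each factor, of order `2!·2!·3! = 24`. -/
def permCoord (g : Equiv.Perm (Fin 2) × Equiv.Perm (Fin 2) × Equiv.Perm (Fin 3)) :
    Fin 2 ⊕ (Fin 2 ⊕ Fin 3) → Fin 2 ⊕ (Fin 2 ⊕ Fin 3) :=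
  Sum.elim (fun i => Sum.inl (g.1 i))
    (Sum.elim (fun i => Sum.inr (Sum.inl (g.2.1 i))) (fun j => Sum.inr (Sum.inr (g.2.2 j))))

/-- The induced action of such a symmetry on points of the simplotope. -/
def act (g : Equiv.Perm (Fin 2) × Equiv.Perm (Fin 2) × Equiv.Perm (Fin 3))
    (x : Fin 2 ⊕ (Fin 2 ⊕ Fin 3) → ℝ) : Fin 2 ⊕ (Fin 2 ⊕ Fin 3) → ℝ :=
  fun z => x (permCoord g z)

/-!
Vertices of `Δ¹ × Δ¹ × Δ²` are labelled by `Fin 2 × Fin 2 × Fin 3`, and the class of a simplex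
depends only on its vertex set, since reordering the rows changes the determinant only by a sign.
So the class-2 simplices can be found by running through the `C(12, 5) = 792` five-element sets
of vertices. A finite computation shows that the class-2 sets are exactly the 24 images of one
of them (a class-2 tetrahedron in a cube facet, coned to a vertex off that facet) under the
coordinate permutations, and that these 24 images are pairwise distinct, so the action is free
and transitive.
-/

open Function Matrix

theorem List.eraseIdx_ofFn {α : Type*} {n : ℕ} (f : Fin (n + 1) → α) (j : Fin (n + 1)) :
    (List.ofFn f).eraseIdx j = List.ofFn fun k => f (j.succAbove k) := by
  induction n with
  | zero => simp [Fin.fin_one_eq_zero j]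
  | succ n ih =>
    cases j using Fin.cases with
    | zero => simp [List.ofFn_succ]
    | succ j =>
      rw [List.ofFn_succ, Fin.val_succ, List.eraseIdx_cons_succ, ih, List.ofFn_succ]
      simp [Fin.succ_succAbove_succ]

/-- Laplace expansion along the first row, for a matrix given by its list of rows. Unlike
`Matrix.det`, it can be evaluated efficiently by the kernel. -/
def laplaceDet {R : Type*} [CommRing R] : ℕ → List (List R) → R
  | 0, _ => 1
  | _ + 1, [] => 1
  | n + 1, r :: rs => ((List.finRange (n + 1)).map fun j : Fin (n + 1) =>
      (-1) ^ (j : ℕ) * r.getD j 0 * laplaceDet n (rs.map (·.eraseIdx j))).sum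

def Matrix.rowLists {R : Type*} {n : ℕ} (A : Matrix (Fin n) (Fin n) R) : List (List R) :=
  List.ofFn fun i => List.ofFn (A i)

theorem Matrix.laplaceDet_rowLists {R : Type*} [CommRing R] {n : ℕ}
    (A : Matrix (Fin n) (Fin n) R) :
    laplaceDet n (rowLists A) = A.det := by
  induction n with
  | zero => simp [laplaceDet]
  | succ n ih =>
    rw [det_succ_row_zero, Fin.sum_univ_def, rowLists, List.ofFn_succ, laplaceDet]
    congr 1
    refine List.map_congr_left fun j _ => ?_
    simp only [List.map_ofFn, Function.comp_def, List.eraseIdx_ofFn]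
    rw [← ih, List.getD_eq_getElem _ _ (by simp [j.is_lt]), List.getElem_ofFn]
    rfl

theorem Matrix.abs_det_submatrix_eq_of_range_eq {R m n : Type*} [CommRing R] [LinearOrder R]
    [IsStrictOrderedRing R] [Fintype n] [DecidableEq n] (A : Matrix m n R) {q q' : n → m}
    (hq : Injective q) (hq' : Injective q') (h : Set.range q = Set.range q') :
    |(A.submatrix q id).det| = |(A.submatrix q' id).det| := by
  let σ : n ≃ n :=
    (Equiv.ofInjective q hq).trans ((Equiv.setCongr h).trans (Equiv.ofInjective q' hq').symm)
  have hσ : q' ∘ σ = q := funext fun i => Equiv.apply_ofInjective_symm hq' _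
  rw [← hσ]
  exact abs_det_submatrix_equiv_equiv σ (Equiv.refl n) (A.submatrix q' id)

theorem zero_or_one_and_sum_eq_one_iff_exists_eq_single {ι R : Type*} [Fintype ι]
    [DecidableEq ι] [CommRing R] [LinearOrder R] [IsStrictOrderedRing R] {x : ι → R} :
    ((∀ i, x i = 0 ∨ x i = 1) ∧ ∑ i, x i = 1) ↔ ∃ i, x = Pi.single i 1 := by
  constructor
  · rintro ⟨h01, hsum⟩
    obtain ⟨i, -, hi⟩ := Finset.exists_ne_zero_of_sum_ne_zero (hsum.symm ▸ one_ne_zero)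
    have hi1 : x i = 1 := (h01 i).resolve_left hi
    refine ⟨i, funext fun j => ?_⟩
    rcases eq_or_ne j i with rfl | hji
    · simp [hi1]
    · have := Finset.add_le_sum (fun k _ => (h01 k).elim (·.symm ▸ le_rfl) (·.symm ▸ zero_le_one))
        (Finset.mem_univ i) (Finset.mem_univ j) hji.symm
      rw [Pi.single_eq_of_ne hji]
      rcases h01 j with h | h <;> [exact h; linarith]
  · rintro ⟨i, rfl⟩
    refine ⟨fun j => ?_, by simp⟩
    rcases eq_or_ne j i with rfl | hji <;> simp [*]

theorem List.range_getD_eq {α : Type*} {n : ℕ} {l : List α} (hl : l.length = n) (d : α) :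
    Set.range (fun i : Fin n => l.getD i d) = {a | a ∈ l} := by
  subst hl
  ext a
  simp [List.mem_iff_getElem, Fin.exists_iff]

theorem List.Nodup.injective_getD {α : Type*} {n : ℕ} {l : List α} (hnd : l.Nodup)
    (hl : l.length = n) (d : α) : Injective fun i : Fin n => l.getD i d := by
  subst hl
  intro i j hij
  simpa [List.getD_eq_getElem, hnd.getElem_inj_iff, Fin.ext_iff] using hij

theorem List.ofFn_getD_eq_map {α β : Type*} {n : ℕ} {l : List α} (hl : l.length = n) (d : α)
    (f : α → β) : List.ofFn (fun i : Fin n => f (l.getD i d)) = l.map f := by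
  subst hl
  exact List.ext_getElem (by simp) fun i _ _ => by simp

namespace Simplotope21

abbrev VertexLabel := Fin 2 × Fin 2 × Fin 3

abbrev FactorPerm := Equiv.Perm (Fin 2) × Equiv.Perm (Fin 2) × Equiv.Perm (Fin 3)

def vertex (p : VertexLabel) : Fin 2 ⊕ (Fin 2 ⊕ Fin 3) → ℝ :=
  Sum.elim (Pi.single p.1 1) (Sum.elim (Pi.single p.2.1 1) (Pi.single p.2.2 1))

theorem isVertex21_iff {x : Fin 2 ⊕ (Fin 2 ⊕ Fin 3) → ℝ} :
    IsVertex21 x ↔ ∃ p, vertex p = x := by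
  constructor
  · rintro ⟨h01, h1, h2, h3⟩
    obtain ⟨a, ha⟩ := zero_or_one_and_sum_eq_one_iff_exists_eq_single.1
      ⟨fun i => h01 (.inl i), by simpa [Fin.sum_univ_two] using h1⟩
    obtain ⟨b, hb⟩ := zero_or_one_and_sum_eq_one_iff_exists_eq_single.1
      ⟨fun i => h01 (.inr (.inl i)), by simpa [Fin.sum_univ_two] using h2⟩
    obtain ⟨c, hc⟩ := zero_or_one_and_sum_eq_one_iff_exists_eq_single.1
      ⟨fun i => h01 (.inr (.inr i)), by simpa [Fin.sum_univ_three] using h3⟩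
    refine ⟨(a, b, c), funext ?_⟩
    rintro (i | i | i)
    exacts [(congrFun ha i).symm, (congrFun hb i).symm, (congrFun hc i).symm]
  · rintro ⟨⟨a, b, c⟩, rfl⟩
    obtain ⟨ha, ha1⟩ := (zero_or_one_and_sum_eq_one_iff_exists_eq_single (R := ℝ)).2 ⟨a, rfl⟩
    obtain ⟨hb, hb1⟩ := (zero_or_one_and_sum_eq_one_iff_exists_eq_single (R := ℝ)).2 ⟨b, rfl⟩
    obtain ⟨hc, hc1⟩ := (zero_or_one_and_sum_eq_one_iff_exists_eq_single (R := ℝ)).2 ⟨c, rfl⟩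
    refine ⟨?_, ?_, ?_, ?_⟩
    · rintro (i | i | i)
      exacts [ha i, hb i, hc i]
    · rw [← ha1, Fin.sum_univ_two]; rfl
    · rw [← hb1, Fin.sum_univ_two]; rfl
    · rw [← hc1, Fin.sum_univ_three]; rfl

theorem vertex_injective : Injective vertex := by
  have single_inj : ∀ {n} (a b : Fin n),
      (Pi.single a 1 : Fin n → ℝ) a = (Pi.single b 1 : Fin n → ℝ) a → a = b := by
    intro n a b h
    by_contra hab
    simp [hab] at h
  rintro ⟨a, b, c⟩ ⟨a', b', c'⟩ h
  simp only [Prod.mk.injEq]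
  exact ⟨single_inj _ _ (congrFun h (.inl a)), single_inj _ _ (congrFun h (.inr (.inl b))),
    single_inj _ _ (congrFun h (.inr (.inr c)))⟩

def permVertex (g : FactorPerm) (p : VertexLabel) : VertexLabel :=
  (g.1⁻¹ p.1, g.2.1⁻¹ p.2.1, g.2.2⁻¹ p.2.2)

theorem act_vertex (g : FactorPerm) (p : VertexLabel) :
    act g (vertex p) = vertex (permVertex g p) := by
  funext z
  rcases z with i | i | i <;>
    simp [act, permCoord, vertex, permVertex, Pi.single_apply, Equiv.eq_symm_apply]

theorem act_act (g h : FactorPerm) (x : Fin 2 ⊕ (Fin 2 ⊕ Fin 3) → ℝ) :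
    act g (act h x) = act (h * g) x := by
  funext z
  rcases z with i | i | i <;> rfl

theorem image_act_image (g h : FactorPerm) (s : Set (Fin 2 ⊕ (Fin 2 ⊕ Fin 3) → ℝ)) :
    act g '' (act h '' s) = act (h * g) '' s := by
  simp only [Set.image_image, act_act]

def reducedRow (p : VertexLabel) : Fin 5 → ℤ :=
  ![1, if p.1 = 0 then 1 else 0, if p.2.1 = 0 then 1 else 0,
    if p.2.2 = 0 then 1 else 0, if p.2.2 = 1 then 1 else 0]

def simplexClass (q : Fin 5 → VertexLabel) : ℤ := |((of reducedRow).submatrix q id).det|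

theorem abs_det_classMat21_vertex (q : Fin 5 → VertexLabel) :
    |(classMat21 (vertex ∘ q)).det| = simplexClass q := by
  have : classMat21 (vertex ∘ q) =
      (Int.castRingHom ℝ).mapMatrix ((of reducedRow).submatrix q id) := by
    ext i j
    fin_cases j <;> simp [classMat21, reducedRow, vertex, Pi.single_apply, apply_ite, eq_comm]
  rw [this, ← RingHom.map_det, simplexClass]
  simp

theorem injective_of_simplexClass_ne_zero {q : Fin 5 → VertexLabel} (hq : simplexClass q ≠ 0) :
    Injective q := by
  intro i j hij
  by_contra hne
  exact hq (by simp [simplexClass, det_zero_of_row_eq hne (M := (of reducedRow).submatrix q id)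
    (by ext; simp [hij])])

def allLabels : List VertexLabel := List.finRange 2 ×ˢ (List.finRange 2 ×ˢ List.finRange 3)

theorem mem_allLabels (p : VertexLabel) : p ∈ allLabels := by
  obtain ⟨a, b, c⟩ := p
  simp [allLabels]

theorem nodup_allLabels : allLabels.Nodup :=
  (List.nodup_finRange 2).product ((List.nodup_finRange 2).product (List.nodup_finRange 3))

/-- A class-2 tetrahedron of the cube facet `Δ¹ × Δ¹ × [e₀, e₁]`, coned to the vertex with
`Δ²`-coordinate `e₂`. -/
def baseSimplex : Fin 5 → VertexLabel := ![(0, 0, 0), (1, 1, 0), (1, 0, 1), (0, 1, 1), (0, 0, 2)]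

theorem simplexClass_permVertex_comp_baseSimplex (g : FactorPerm) :
    simplexClass (permVertex g ∘ baseSimplex) = 2 := by
  have h : ∀ g : FactorPerm,
      |laplaceDet 5 (rowLists ((of reducedRow).submatrix (permVertex g ∘ baseSimplex) id))| = 2 :=
    by decide +kernel
  simpa [simplexClass, laplaceDet_rowLists] using h g

theorem injective_image_baseSimplex :
    Injective fun g : FactorPerm => Finset.univ.image (permVertex g ∘ baseSimplex) := by
  decide +kernel

theorem exists_image_baseSimplex_of_mem_sublistsLen :
    ∀ l ∈ allLabels.sublistsLen 5, |laplaceDet 5 (l.map fun p => List.ofFn (reducedRow p))| = 2 →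
      ∃ g : FactorPerm, Finset.univ.image (permVertex g ∘ baseSimplex) = l.toFinset := by
  decide +kernel

theorem exists_range_eq_of_simplexClass_eq_two {q : Fin 5 → VertexLabel}
    (hq : simplexClass q = 2) : ∃ g, Set.range (permVertex g ∘ baseSimplex) = Set.range q := by
  have hinj := injective_of_simplexClass_ne_zero (hq ▸ two_ne_zero)
  set l := allLabels.filter (· ∈ Finset.univ.image q)
  have hl_nodup : l.Nodup := nodup_allLabels.filter _
  have hl_mem : {p | p ∈ l} = Set.range q := by
    ext p
    simp [l, mem_allLabels]
  have hl_len : l.length = 5 := by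
    rw [← List.toFinset_card_of_nodup hl_nodup, ← Finset.card_fin 5,
      ← Finset.card_image_of_injective Finset.univ hinj]
    congr 1
    ext p
    simp [l, mem_allLabels]
  have hl_class : |laplaceDet 5 (l.map fun p => List.ofFn (reducedRow p))| = 2 := by
    rw [← hq, simplexClass, ← Matrix.abs_det_submatrix_eq_of_range_eq _
      (hl_nodup.injective_getD hl_len 0) hinj ((List.range_getD_eq hl_len 0).trans hl_mem),
      ← Matrix.laplaceDet_rowLists, ← List.ofFn_getD_eq_map hl_len 0]
    rfl
  obtain ⟨g, hg⟩ := exists_image_baseSimplex_of_mem_sublistsLen l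
    (List.mem_sublistsLen.2 ⟨List.filter_sublist, hl_len⟩) hl_class
  refine ⟨g, ?_⟩
  rw [← hl_mem, ← Set.image_univ, ← Finset.coe_univ, ← Finset.coe_image, hg]
  simp

def baseSet : Set (Fin 2 ⊕ (Fin 2 ⊕ Fin 3) → ℝ) := Set.range (vertex ∘ baseSimplex)

theorem image_act_baseSet (g : FactorPerm) :
    act g '' baseSet = vertex '' Set.range (permVertex g ∘ baseSimplex) := by
  simp only [baseSet, Set.range_comp, Set.image_image, act_vertex]

theorem isClass2Set_iff {s : Set (Fin 2 ⊕ (Fin 2 ⊕ Fin 3) → ℝ)} :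
    IsClass2Set s ↔ ∃ g, act g '' baseSet = s := by
  constructor
  · rintro ⟨w, rfl, hw, hclass⟩
    choose q hq using fun r => isVertex21_iff.1 (hw r)
    obtain rfl : vertex ∘ q = w := funext hq
    rw [abs_det_classMat21_vertex] at hclass
    obtain ⟨g, hg⟩ := exists_range_eq_of_simplexClass_eq_two (by exact_mod_cast hclass)
    exact ⟨g, by rw [image_act_baseSet, hg, Set.range_comp]⟩
  · rintro ⟨g, rfl⟩
    refine ⟨vertex ∘ permVertex g ∘ baseSimplex, ?_, fun r => isVertex21_iff.2 ⟨_, rfl⟩, ?_⟩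
    · rw [image_act_baseSet, ← Set.range_comp]
    · rw [abs_det_classMat21_vertex, simplexClass_permVertex_comp_baseSimplex]
      norm_num

theorem injective_image_act_baseSet : Injective fun g => act g '' baseSet := by
  intro g h hgh
  simp only [image_act_baseSet] at hgh
  apply injective_image_baseSimplex
  apply Finset.coe_injective
  rw [Finset.coe_image, Finset.coe_image, Finset.coe_univ, Set.image_univ, Set.image_univ]
  exact Set.image_injective.2 vertex_injective hgh

end Simplotope21

open Simplotope21

/-- There are exactly 24 five-element vertex sets of `Δ¹ × Δ¹ × Δ²` spanning a simplex of
class 2, and the group of within-factor coordinate permutations (of order 24) acts simply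
transitively on them. -/
theorem stmt18 :
    Nat.card {s : Set (Fin 2 ⊕ (Fin 2 ⊕ Fin 3) → ℝ) // IsClass2Set s} = 24 ∧
    ∀ s₁ s₂, IsClass2Set s₁ → IsClass2Set s₂ →
      ∃! g : Equiv.Perm (Fin 2) × Equiv.Perm (Fin 2) × Equiv.Perm (Fin 3),
        act g '' s₁ = s₂ := by
  have hbij : Bijective fun g : FactorPerm =>
      (⟨act g '' baseSet, isClass2Set_iff.2 ⟨g, rfl⟩⟩ : {s // IsClass2Set s}) :=
    ⟨fun g h hgh => injective_image_act_baseSet (congrArg Subtype.val hgh),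
      fun ⟨s, hs⟩ => (isClass2Set_iff.1 hs).imp fun g hg => Subtype.ext hg⟩
  refine ⟨?_, fun s₁ s₂ h₁ h₂ => ?_⟩
  · rw [← Nat.card_eq_of_bijective _ hbij, Nat.card_eq_fintype_card]
    simp [Fintype.card_perm, Nat.factorial]
  · obtain ⟨g₁, rfl⟩ := isClass2Set_iff.1 h₁
    obtain ⟨g₂, rfl⟩ := isClass2Set_iff.1 h₂
    refine ⟨g₁⁻¹ * g₂, ?_, fun g hg => ?_⟩
    · simp only [image_act_image, mul_inv_cancel_left]
    · simp only [image_act_image] at hg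
      rw [← injective_image_act_baseSet hg, inv_mul_cancel_left]
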